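/- (Theorem 3.3) Let G be a second countable LCA group and Λ a closed subgroup of Ĝ. The space MI(G) of all Λ-modulation invariant subspaces of L²(G) is a complete metric space under the modulation metric θ: every Cauchy sequence (W_n) in (MI(G), θ) converges to some W ∈ MI(G). -/

import Mathlib

open MeasureTheory
open scoped ENNReal

/-- The modulation metric
θ(V, W) = inf{α > 0 : m({x ∈ Π : ‖P_{J_V}(x) − P_{J_W}(x)‖ > α}) = 0},
here expressed via an assignment P of (projection-valued) range functions. -/
noncomputable def modMetric {X H ι : Type*} [MeasurableSpace X]
    [NormedAddCommGroup H] [NormedSpace ℂ H]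
    (m' : MeasureTheory.Measure X) (P : ι → X → H →L[ℂ] H) (V W : ι) : ℝ :=
  sInf {α : ℝ | 0 < α ∧ m' {x | α < ‖P V x - P W x‖} = 0}

/-!
A Cauchy sequence for `θ` is essentially uniformly Cauchy, so off a null set the projections
`P_{W_n}(x)` converge in operator norm to some `Q(x)`, which is again an orthogonal projection
since the orthogonal projections form a closed set. Let `W` be the space of those `f` with
`Z̃f(x) ∈ ran Q(x)` a.e.: it is closed, and it is `Λ`-modulation invariant because `Z̃` turns a
modulation by `λ ∈ Λ` into pointwise multiplication by the scalar `λ(x)`. A range function of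
projections is determined a.e. by its space (test the space on the truncations
`1_E · Q(·) b` of a dense sequence `b` to sets `E` of finite measure), so `P_{J_W} = Q` a.e.,
and hence `θ(W_n, W) → 0`.
-/

open Filter Topology

section OrthogonalProjection

variable {𝕜 E : Type*} [RCLike 𝕜] [NormedAddCommGroup E] [InnerProductSpace 𝕜 E]

def IsOrthogonalProjectionOnto (T : E →L[𝕜] E) (K : Submodule 𝕜 E) : Prop :=
  ∀ v, T v ∈ K ∧ ∀ w ∈ K, inner 𝕜 (v - T v) w = 0

namespace IsOrthogonalProjectionOnto

variable {T : E →L[𝕜] E} {K : Submodule 𝕜 E}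

theorem hasOrthogonalProjection (hT : IsOrthogonalProjectionOnto T K) :
    K.HasOrthogonalProjection :=
  ⟨fun v => ⟨T v, (hT v).1, fun w hw => by rw [inner_eq_zero_symm]; exact (hT v).2 w hw⟩⟩

theorem exists_eq_starProjection (hT : IsOrthogonalProjectionOnto T K) :
    ∃ _ : K.HasOrthogonalProjection, T = K.starProjection :=
  have := hT.hasOrthogonalProjection
  ⟨this, ContinuousLinearMap.ext fun v =>
    (K.eq_starProjection_of_mem_of_inner_eq_zero (hT v).1 (hT v).2).symm⟩

theorem isStarProjection [CompleteSpace E] (hT : IsOrthogonalProjectionOnto T K) :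
    IsStarProjection T :=
  isStarProjection_iff_eq_starProjection.2 ⟨K, hT.exists_eq_starProjection⟩

theorem range_eq (hT : IsOrthogonalProjectionOnto T K) : T.range = K := by
  obtain ⟨_, rfl⟩ := hT.exists_eq_starProjection
  exact K.range_starProjection

end IsOrthogonalProjectionOnto

theorem isClosed_setOf_isStarProjection {R : Type*} [Mul R] [Star R] [TopologicalSpace R]
    [T2Space R] [ContinuousMul R] [ContinuousStar R] : IsClosed {p : R | IsStarProjection p} := by
  have h : {p : R | IsStarProjection p} = {p | p * p = p} ∩ {p | star p = p} := by
    ext p; exact ⟨fun hp => ⟨hp.isIdempotentElem, hp.isSelfAdjoint⟩, fun hp => ⟨hp.1, hp.2⟩⟩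
  rw [h]
  exact (isClosed_eq (continuous_id.mul continuous_id) continuous_id).inter
    (isClosed_eq continuous_star continuous_id)

theorem ContinuousLinearMap.range_le_range_of_denseRange {R M β : Type*} [Semiring R]
    [TopologicalSpace M] [AddCommMonoid M] [Module R M] [T2Space M] {p q : M →L[R] M}
    (hp : IsIdempotentElem p) {b : β → M} (hb : DenseRange b) (h : ∀ i, q (b i) ∈ p.range) :
    q.range ≤ p.range := by
  have hfix : ∀ y ∈ p.range, p y = y := by
    rintro _ ⟨z, rfl⟩
    exact DFunLike.congr_fun hp.eq z
  have hpq : p ∘ q = q := hb.equalizer (p.continuous.comp q.continuous) q.continuous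
    (funext fun i => hfix _ (h i))
  rintro _ ⟨v, rfl⟩
  exact ⟨q v, congrFun hpq v⟩

end OrthogonalProjection

section WeakMeasurability

variable {X 𝕜 E : Type*} [MeasurableSpace X] [RCLike 𝕜] [NormedAddCommGroup E]
  [InnerProductSpace 𝕜 E] [CompleteSpace E] [TopologicalSpace.SeparableSpace E]

theorem stronglyMeasurable_of_measurable_inner {f : X → E}
    (hf : ∀ w, Measurable fun x => inner 𝕜 (f x) w) : StronglyMeasurable f := by
  borelize E
  obtain ⟨b, hb⟩ := TopologicalSpace.exists_dense_seq E
  let g : E → ℕ → 𝕜 := fun v i => inner 𝕜 v (b i)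
  have hg : Continuous g := continuous_pi fun i => continuous_id.inner continuous_const
  have hinj : Function.Injective g := fun v w hvw =>
    ext_inner_right 𝕜 fun u => congrFun (hb.equalizer (continuous_const.inner continuous_id)
      (continuous_const.inner continuous_id) (funext fun i => congrFun hvw i)) u
  refine Measurable.stronglyMeasurable ?_
  rw [← (hg.measurableEmbedding hinj).measurable_comp_iff]
  exact measurable_pi_iff.2 fun i => hf (b i)

end WeakMeasurability

theorem exists_tendstoUniformlyOn_of_ae_uniformCauchy {X E : Type*} [MeasurableSpace X]
    [MetricSpace E] [CompleteSpace E] {μ : Measure X} {f : ℕ → X → E}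
    (hf : ∀ ε > 0, ∃ N, ∀ m ≥ N, ∀ n ≥ N, ∀ᵐ x ∂μ, dist (f m x) (f n x) < ε) :
    ∃ g : X → E, ∃ s ∈ ae μ, TendstoUniformlyOn f g atTop s := by
  choose N hN using fun k : ℕ => hf (1 / (k + 1)) Nat.one_div_pos_of_nat
  set s := {x | ∀ k, ∀ m ≥ N k, ∀ n ≥ N k, dist (f m x) (f n x) < 1 / (k + 1)}
  have hs : ∀ᵐ x ∂μ, x ∈ s := by
    simpa only [s, Set.mem_ofPred_eq, ae_all_iff, eventually_imp_distrib_left] using hN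
  have hcauchy : UniformCauchySeqOn f atTop s := by
    refine Metric.uniformCauchySeqOn_iff.2 fun ε hε => ?_
    obtain ⟨k, hk⟩ := exists_nat_one_div_lt hε
    exact ⟨N k, fun m hm n hn x hx => (hx k m hm n hn).trans hk⟩
  -- `E` may be empty, so `limUnder` takes its `Nonempty` instance from `f 0 x`.
  refine ⟨fun x => @limUnder _ _ _ ⟨f 0 x⟩ atTop fun n => f n x, s, hs,
    hcauchy.tendstoUniformlyOn_of_tendsto fun x hx => ?_⟩
  have : Nonempty E := ⟨f 0 x⟩
  exact (hcauchy.cauchySeq hx).tendsto_limUnder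

section ModulationMetric

variable {X H ι : Type*} [MeasurableSpace X] [NormedAddCommGroup H] [NormedSpace ℂ H]
  {μ : Measure X} {P : ι → X → H →L[ℂ] H} {V W : ι} {w : ℕ → ι}

theorem modMetric_nonneg : 0 ≤ modMetric μ P V W :=
  Real.sInf_nonneg fun _ hα => hα.1.le

theorem ae_norm_sub_lt_of_modMetric_lt {C ε : ℝ} (hC : ∀ᵐ x ∂μ, ‖P V x - P W x‖ ≤ C)
    (h : modMetric μ P V W < ε) : ∀ᵐ x ∂μ, ‖P V x - P W x‖ < ε := by
  have hC' : max C 0 + 1 ∈ {α : ℝ | 0 < α ∧ μ {x | α < ‖P V x - P W x‖} = 0} := by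
    refine ⟨by positivity, measure_mono_null (fun x hx => ?_) (ae_iff.1 hC)⟩
    simp only [Set.mem_ofPred_eq] at hx ⊢
    linarith [le_max_left C 0]
  obtain ⟨α, ⟨-, hα⟩, hαε⟩ := exists_lt_of_csInf_lt ⟨_, hC'⟩ h
  filter_upwards [measure_eq_zero_iff_ae_notMem.1 hα] with x hx
  simp only [not_lt] at hx
  linarith

theorem modMetric_le_of_ae_norm_sub_le {δ : ℝ} (hδ : 0 < δ) (h : ∀ᵐ x ∂μ, ‖P V x - P W x‖ ≤ δ) :
    modMetric μ P V W ≤ δ := by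
  refine csInf_le ⟨0, fun _ hα => hα.1.le⟩ ⟨hδ, measure_mono_null (fun x hx => ?_) (ae_iff.1 h)⟩
  simpa using hx

theorem exists_tendstoUniformlyOn_of_modMetric_cauchy [CompleteSpace H]
    (hw : ∀ n x, ‖P (w n) x‖ ≤ 1)
    (hcauchy : ∀ ε : ℝ, 0 < ε → ∃ N : ℕ, ∀ m ≥ N, ∀ n ≥ N, modMetric μ P (w m) (w n) < ε) :
    ∃ Q : X → H →L[ℂ] H, ∃ s ∈ ae μ, TendstoUniformlyOn (fun n => P (w n)) Q atTop s := by
  refine exists_tendstoUniformlyOn_of_ae_uniformCauchy fun ε hε => ?_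
  obtain ⟨N, hN⟩ := hcauchy ε hε
  refine ⟨N, fun i hi j hj => ?_⟩
  have hbound : ∀ x, ‖P (w i) x - P (w j) x‖ ≤ 2 := fun x =>
    (norm_sub_le _ _).trans (by linarith [hw i x, hw j x])
  simpa only [dist_eq_norm] using
    ae_norm_sub_lt_of_modMetric_lt (Eventually.of_forall hbound) (hN i hi j hj)

theorem tendsto_modMetric_of_tendstoUniformlyOn {Q : X → H →L[ℂ] H} {s : Set X} {V : ι}
    (hs : s ∈ ae μ) (hQ : TendstoUniformlyOn (fun n => P (w n)) Q atTop s) (hV : P V =ᵐ[μ] Q) :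
    Tendsto (fun n => modMetric μ P (w n) V) atTop (𝓝 0) := by
  refine Metric.tendsto_nhds.2 fun ε hε => ?_
  filter_upwards [Metric.tendstoUniformlyOn_iff.1 hQ (ε / 2) (half_pos hε)] with n hn
  have hle : modMetric μ P (w n) V ≤ ε / 2 := by
    refine modMetric_le_of_ae_norm_sub_le (half_pos hε) ?_
    filter_upwards [hs, hV] with x hx hVx
    rw [hVx, ← dist_eq_norm, dist_comm]
    exact (hn x hx).le
  rw [Real.dist_0_eq_abs, abs_of_nonneg modMetric_nonneg]
  linarith

end ModulationMetric

namespace MeasureTheory.Lp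

section RangeFunction

variable {X 𝕜 E : Type*} [MeasurableSpace X] [NormedField 𝕜] [NormedAddCommGroup E]
  [NormedSpace 𝕜 E] {p : ℝ≥0∞} {μ : Measure X} {S T : X → Submodule 𝕜 E}

def rangeFunctionSubmodule (p : ℝ≥0∞) (μ : Measure X) (S : X → Submodule 𝕜 E) :
    Submodule 𝕜 (Lp E p μ) where
  carrier := {g | ∀ᵐ x ∂μ, g x ∈ S x}
  add_mem' {f g} hf hg := by
    filter_upwards [hf, hg, Lp.coeFn_add f g] with x hfx hgx hx
    rw [hx, Pi.add_apply]
    exact (S x).add_mem hfx hgx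
  zero_mem' := by
    filter_upwards [Lp.coeFn_zero E p μ] with x hx
    rw [hx]
    exact (S x).zero_mem
  smul_mem' c g hg := by
    filter_upwards [hg, Lp.coeFn_smul c g] with x hgx hx
    rw [hx, Pi.smul_apply]
    exact (S x).smul_mem c hgx

theorem mem_rangeFunctionSubmodule_of_ae_eq_smul {g g' : Lp E p μ} {c : X → 𝕜}
    (hg : g ∈ rangeFunctionSubmodule p μ S) (h : g' =ᵐ[μ] fun x => c x • g x) :
    g' ∈ rangeFunctionSubmodule p μ S := by
  filter_upwards [hg, h] with x hgx hx
  rw [hx]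
  exact (S x).smul_mem (c x) hgx

theorem isClosed_rangeFunctionSubmodule [Fact (1 ≤ p)]
    (hS : ∀ᵐ x ∂μ, IsClosed (S x : Set E)) :
    IsClosed (rangeFunctionSubmodule p μ S : Set (Lp E p μ)) := by
  refine IsSeqClosed.isClosed fun g g₀ hg hlim => ?_
  obtain ⟨φ, -, hφ⟩ := (tendstoInMeasure_of_tendsto_Lp hlim).exists_seq_tendsto_ae
  have hgφ : ∀ᵐ x ∂μ, ∀ j, g (φ j) x ∈ S x := ae_all_iff.2 fun j => hg (φ j)
  filter_upwards [hS, hφ, hgφ] with x hSx hx hgx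
  exact hSx.mem_of_tendsto hx (Eventually.of_forall hgx)

theorem ae_mem_of_rangeFunctionSubmodule_le [SigmaFinite μ]
    (h : rangeFunctionSubmodule p μ S ≤ rangeFunctionSubmodule p μ T) {φ : X → E} {C : ℝ}
    (hφ : AEStronglyMeasurable φ μ) (hφC : ∀ᵐ x ∂μ, ‖φ x‖ ≤ C) (hφS : ∀ᵐ x ∂μ, φ x ∈ S x) :
    ∀ᵐ x ∂μ, φ x ∈ T x := by
  -- `φ` need not be in `Lp`, but its restrictions to the sets of finite measure are.
  have hj : ∀ j, ∀ᵐ x ∂μ, x ∈ spanningSets μ j → φ x ∈ T x := by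
    intro j
    have hmeas := measurableSet_spanningSets μ j
    have : IsFiniteMeasure (μ.restrict (spanningSets μ j)) :=
      ⟨by simpa using measure_spanningSets_lt_top μ j⟩
    have hφj : MemLp ((spanningSets μ j).indicator φ) p μ :=
      (memLp_indicator_iff_restrict hmeas).2 (.of_bound hφ.restrict C (ae_restrict_of_ae hφC))
    have hS : hφj.toLp _ ∈ rangeFunctionSubmodule p μ S := by
      filter_upwards [hφS, hφj.coeFn_toLp] with x hx hx'
      by_cases hxj : x ∈ spanningSets μ j
      · rwa [hx', Set.indicator_of_mem hxj]
      · rw [hx', Set.indicator_of_notMem hxj]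
        exact (S x).zero_mem
    filter_upwards [h hS, hφj.coeFn_toLp] with x hx hx' hxj
    rwa [hx', Set.indicator_of_mem hxj] at hx
  filter_upwards [ae_all_iff.2 hj] with x hx
  exact hx _ (mem_spanningSetsIndex μ x)

end RangeFunction

section Uniqueness

variable {X 𝕜 E : Type*} [MeasurableSpace X] {p : ℝ≥0∞} {μ : Measure X} [SigmaFinite μ]

theorem ae_range_le_of_rangeFunctionSubmodule_le [NontriviallyNormedField 𝕜]
    [NormedAddCommGroup E] [NormedSpace 𝕜 E] [TopologicalSpace.SeparableSpace E]
    {P Q : X → E →L[𝕜] E} {C : ℝ}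
    (hP : ∀ᵐ x ∂μ, IsIdempotentElem (P x)) (hQC : ∀ᵐ x ∂μ, ‖Q x‖ ≤ C)
    (hQm : ∀ v, AEStronglyMeasurable (fun x => Q x v) μ)
    (h : rangeFunctionSubmodule p μ (fun x => (Q x).range) ≤
      rangeFunctionSubmodule p μ (fun x => (P x).range)) :
    ∀ᵐ x ∂μ, (Q x).range ≤ (P x).range := by
  obtain ⟨b, hb⟩ := TopologicalSpace.exists_dense_seq E
  have hQb : ∀ᵐ x ∂μ, ∀ i, Q x (b i) ∈ (P x).range := ae_all_iff.2 fun i =>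
    ae_mem_of_rangeFunctionSubmodule_le h (hQm (b i))
      (hQC.mono fun x hx => (Q x).le_of_opNorm_le hx (b i))
      (Eventually.of_forall fun x => LinearMap.mem_range_self _ _)
  filter_upwards [hP, hQb] with x hPx hx
  exact ContinuousLinearMap.range_le_range_of_denseRange hPx hb hx

theorem ae_eq_of_rangeFunctionSubmodule_eq [RCLike 𝕜] [NormedAddCommGroup E]
    [InnerProductSpace 𝕜 E] [CompleteSpace E] [TopologicalSpace.SeparableSpace E]
    {P Q : X → E →L[𝕜] E}
    (hP : ∀ᵐ x ∂μ, IsStarProjection (P x)) (hQ : ∀ᵐ x ∂μ, IsStarProjection (Q x))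
    (hPm : ∀ v, AEStronglyMeasurable (fun x => P x v) μ)
    (hQm : ∀ v, AEStronglyMeasurable (fun x => Q x v) μ)
    (h : rangeFunctionSubmodule p μ (fun x => (P x).range) =
      rangeFunctionSubmodule p μ (fun x => (Q x).range)) :
    P =ᵐ[μ] Q := by
  have hle := ae_range_le_of_rangeFunctionSubmodule_le (hP.mono fun x hx => hx.isIdempotentElem)
    (hQ.mono fun x hx => hx.norm_le) hQm h.ge
  have hge := ae_range_le_of_rangeFunctionSubmodule_le (hQ.mono fun x hx => hx.isIdempotentElem)
    (hP.mono fun x hx => hx.norm_le) hPm h.le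
  filter_upwards [hP, hQ, hle, hge] with x hPx hQx hQP hPQ
  exact (ContinuousLinearMap.IsStarProjection.ext_iff hPx hQx).2 (le_antisymm hPQ hQP)

end Uniqueness

end MeasureTheory.Lp

theorem stmt13_general
    (G : Type) [CommGroup G] [TopologicalSpace G] [IsTopologicalGroup G]
    [LocallyCompactSpace G] [SecondCountableTopology G]
    [MeasurableSpace G]
    (μ : MeasureTheory.Measure G) [μ.IsHaarMeasure]
    [MeasurableSpace (PontryaginDual G)] [BorelSpace (PontryaginDual G)]
    [SecondCountableTopology (PontryaginDual G)]
    (ν : MeasureTheory.Measure (PontryaginDual G)) [ν.IsHaarMeasure]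
    -- Λ a closed subgroup of the dual group Ĝ
    (Λ : Subgroup (PontryaginDual G))
    -- Π, a measurable section for G / Λ* (Λ* = the annihilator of Λ in G)
    (PiS : Set G)
    -- D, a measurable section for Ĝ / Λ
    (DS : Set (PontryaginDual G))
    -- the modulation operators M_χ on L²(G) : (M_χ f)(x) = χ(x) f(x)
    (Mod : PontryaginDual G → (MeasureTheory.Lp ℂ 2 μ →L[ℂ] MeasureTheory.Lp ℂ 2 μ))
    -- the translation operators T_λ on L²(Ĝ) : (T_λ g)(χ) = g(χ - λ)
    (Trans : PontryaginDual G → (MeasureTheory.Lp ℂ 2 ν →L[ℂ] MeasureTheory.Lp ℂ 2 ν))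
    -- the Fourier (Plancherel) transform F : L²(G) → L²(Ĝ), intertwining
    -- modulations with translations
    (F : MeasureTheory.Lp ℂ 2 μ ≃ₗᵢ[ℂ] MeasureTheory.Lp ℂ 2 ν)
    (hF : ∀ χ f, F (Mod χ f) = Trans χ (F f))
    -- the Zak-type isometric isomorphism Z : L²(Ĝ) → L²(Π, L²(D)) of
    -- Bownik–Helson–Petersen, satisfying Z(T_λ φ) = X_λ|_Π · Z(φ) for λ ∈ Λ
    (Z : MeasureTheory.Lp ℂ 2 ν ≃ₗᵢ[ℂ]
      MeasureTheory.Lp (MeasureTheory.Lp ℂ 2 (ν.restrict DS)) 2 (μ.restrict PiS))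
    (hZ : ∀ l ∈ Λ, ∀ g, Z (Trans l g) =ᵐ[μ.restrict PiS]
      fun x => ((l x : ℂ)) • (Z g) x)
-- J assigns to each Λ-modulation invariant subspace W its associated
    -- measurable range function J W, with orthogonal projections P W x onto J W x
    (J : Submodule ℂ (MeasureTheory.Lp ℂ 2 μ) → G →
      Submodule ℂ (MeasureTheory.Lp ℂ 2 (ν.restrict DS)))
    (P : Submodule ℂ (MeasureTheory.Lp ℂ 2 μ) → G →
      (MeasureTheory.Lp ℂ 2 (ν.restrict DS)) →L[ℂ] (MeasureTheory.Lp ℂ 2 (ν.restrict DS)))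
    (hJP : ∀ W : Submodule ℂ (MeasureTheory.Lp ℂ 2 μ),
      IsClosed (W : Set (MeasureTheory.Lp ℂ 2 μ)) →
      (∀ l ∈ Λ, ∀ f ∈ W, Mod l f ∈ W) →
      (∀ x, IsClosed ((J W x : Set (MeasureTheory.Lp ℂ 2 (ν.restrict DS))))) ∧
      (∀ x v, P W x v ∈ J W x ∧ ∀ w ∈ J W x, (inner ℂ (v - P W x v) w : ℂ) = 0) ∧
      (∀ a b : MeasureTheory.Lp ℂ 2 (ν.restrict DS),
        Measurable fun x => (inner ℂ (P W x a) b : ℂ)) ∧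
      (∀ f : MeasureTheory.Lp ℂ 2 μ,
        f ∈ W ↔ ∀ᵐ x ∂(μ.restrict PiS), (Z (F f)) x ∈ J W x))
    (Wseq : ℕ → Submodule ℂ (Lp ℂ 2 μ))
    (hWseq : ∀ n, IsClosed ((Wseq n : Set (Lp ℂ 2 μ))) ∧
      ∀ l ∈ Λ, ∀ f ∈ Wseq n, Mod l f ∈ Wseq n)
    -- (Wₙ) is Cauchy in the modulation metric
    (hCauchy : ∀ ε : ℝ, 0 < ε → ∃ N : ℕ, ∀ m ≥ N, ∀ n ≥ N,
      modMetric (μ.restrict PiS) P (Wseq m) (Wseq n) < ε) :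
    ∃ W : Submodule ℂ (Lp ℂ 2 μ),
      IsClosed ((W : Set (Lp ℂ 2 μ))) ∧ (∀ l ∈ Λ, ∀ f ∈ W, Mod l f ∈ W) ∧
      Filter.Tendsto (fun n => modMetric (μ.restrict PiS) P (Wseq n) W)
        Filter.atTop (nhds 0) := by
  -- makes `L²(D)` second countable
  have : Fact ((2 : ℝ≥0∞) ≠ ∞) := ⟨ENNReal.ofNat_ne_top⟩
  let U := F.trans Z
  have hPseq n x : IsStarProjection (P (Wseq n) x) :=
    IsOrthogonalProjectionOnto.isStarProjection ((hJP _ (hWseq n).1 (hWseq n).2).2.1 x)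
  obtain ⟨Q, s, hs, hQ⟩ := exists_tendstoUniformlyOn_of_modMetric_cauchy
    (fun n x => (hPseq n x).norm_le) hCauchy
  have hQproj : ∀ᵐ x ∂(μ.restrict PiS), IsStarProjection (Q x) := by
    filter_upwards [hs] with x hx
    exact isClosed_setOf_isStarProjection.mem_of_tendsto (hQ.tendsto_at hx)
      (Eventually.of_forall fun n => hPseq n x)
  have hPseqm n v : StronglyMeasurable fun x => P (Wseq n) x v :=
    stronglyMeasurable_of_measurable_inner ((hJP _ (hWseq n).1 (hWseq n).2).2.2.1 v)
  have hQm v : AEStronglyMeasurable (fun x => Q x v) (μ.restrict PiS) := by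
    refine aestronglyMeasurable_of_tendsto_ae atTop (fun n => (hPseqm n v).aestronglyMeasurable) ?_
    filter_upwards [hs] with x hx
    exact ((ContinuousLinearMap.apply ℂ _ v).continuous.tendsto _).comp (hQ.tendsto_at hx)
  let W := (Lp.rangeFunctionSubmodule 2 (μ.restrict PiS) fun x => (Q x).range).comap
    (U : Lp ℂ 2 μ →ₗ[ℂ] Lp (Lp ℂ 2 (ν.restrict DS)) 2 (μ.restrict PiS))
  have hWclosed : IsClosed (W : Set (Lp ℂ 2 μ)) :=
    (Lp.isClosed_rangeFunctionSubmodule (hQproj.mono fun x hx =>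
      ContinuousLinearMap.IsIdempotentElem.isClosed_range hx.isIdempotentElem)).preimage
      U.continuous
  have hWinv : ∀ l ∈ Λ, ∀ f ∈ W, Mod l f ∈ W := fun l hl f hf =>
    Lp.mem_rangeFunctionSubmodule_of_ae_eq_smul hf (by simpa [U, hF] using hZ l hl (F f))
  obtain ⟨-, hPW, hPWm, hWmem⟩ := hJP W hWclosed hWinv
  have hPQ : P W =ᵐ[μ.restrict PiS] Q := by
    refine Lp.ae_eq_of_rangeFunctionSubmodule_eq (p := 2)
      (Eventually.of_forall fun x => IsOrthogonalProjectionOnto.isStarProjection (hPW x)) hQproj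
      (fun v => (stronglyMeasurable_of_measurable_inner (hPWm v)).aestronglyMeasurable) hQm ?_
    have hJ : (fun x => (P W x).range) = J W :=
      funext fun x => IsOrthogonalProjectionOnto.range_eq (hPW x)
    rw [hJ]
    exact Submodule.comap_injective_of_surjective U.surjective
      (SetLike.ext fun f => (hWmem f).symm)
  exact ⟨W, hWclosed, hWinv, tendsto_modMetric_of_tendstoUniformlyOn hs hQ hPQ⟩

/-- Theorem 3.3. The space MI(G) of all Λ-modulation invariant
subspaces of L²(G) is complete in the modulation metric θ: every Cauchy sequence
converges to a Λ-modulation invariant subspace. -/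
theorem stmt13
    (G : Type) [CommGroup G] [TopologicalSpace G] [IsTopologicalGroup G]
    [LocallyCompactSpace G] [SecondCountableTopology G]
    [MeasurableSpace G] [BorelSpace G]
    (μ : MeasureTheory.Measure G) [μ.IsHaarMeasure]
    [MeasurableSpace (PontryaginDual G)] [BorelSpace (PontryaginDual G)]
    [LocallyCompactSpace (PontryaginDual G)] [SecondCountableTopology (PontryaginDual G)]
    (ν : MeasureTheory.Measure (PontryaginDual G)) [ν.IsHaarMeasure]
    -- Λ a closed subgroup of the dual group Ĝ
    (Λ : Subgroup (PontryaginDual G)) (hΛ : IsClosed (Λ : Set (PontryaginDual G)))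
    -- Π, a measurable section for G / Λ* (Λ* = the annihilator of Λ in G)
    (PiS : Set G) (hPiSmeas : MeasurableSet PiS)
    (hPiSsec : ∀ x : G, ∃! p, p ∈ PiS ∧ ∀ l ∈ Λ, l (x / p) = 1)
    -- D, a measurable section for Ĝ / Λ
    (DS : Set (PontryaginDual G)) (hDSmeas : MeasurableSet DS)
    (hDSsec : ∀ χ : PontryaginDual G, ∃! d, d ∈ DS ∧ χ / d ∈ Λ)
    -- the modulation operators M_χ on L²(G) : (M_χ f)(x) = χ(x) f(x)
    (Mod : PontryaginDual G → (MeasureTheory.Lp ℂ 2 μ →L[ℂ] MeasureTheory.Lp ℂ 2 μ))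
    (hMod : ∀ χ f, Mod χ f =ᵐ[μ] fun x => (χ x : ℂ) * f x)
    -- the translation operators T_λ on L²(Ĝ) : (T_λ g)(χ) = g(χ - λ)
    (Trans : PontryaginDual G → (MeasureTheory.Lp ℂ 2 ν →L[ℂ] MeasureTheory.Lp ℂ 2 ν))
    (hTrans : ∀ l g, Trans l g =ᵐ[ν] fun χ => g (χ / l))
    -- the Fourier (Plancherel) transform F : L²(G) → L²(Ĝ), intertwining
    -- modulations with translations
    (F : MeasureTheory.Lp ℂ 2 μ ≃ₗᵢ[ℂ] MeasureTheory.Lp ℂ 2 ν)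
    (hF : ∀ χ f, F (Mod χ f) = Trans χ (F f))
    -- the Zak-type isometric isomorphism Z : L²(Ĝ) → L²(Π, L²(D)) of
    -- Bownik–Helson–Petersen, satisfying Z(T_λ φ) = X_λ|_Π · Z(φ) for λ ∈ Λ
    (Z : MeasureTheory.Lp ℂ 2 ν ≃ₗᵢ[ℂ]
      MeasureTheory.Lp (MeasureTheory.Lp ℂ 2 (ν.restrict DS)) 2 (μ.restrict PiS))
    (hZ : ∀ l ∈ Λ, ∀ g, Z (Trans l g) =ᵐ[μ.restrict PiS]
      fun x => ((l x : ℂ)) • (Z g) x)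
-- J assigns to each Λ-modulation invariant subspace W its associated
    -- measurable range function J W, with orthogonal projections P W x onto J W x
    (J : Submodule ℂ (MeasureTheory.Lp ℂ 2 μ) → G →
      Submodule ℂ (MeasureTheory.Lp ℂ 2 (ν.restrict DS)))
    (P : Submodule ℂ (MeasureTheory.Lp ℂ 2 μ) → G →
      (MeasureTheory.Lp ℂ 2 (ν.restrict DS)) →L[ℂ] (MeasureTheory.Lp ℂ 2 (ν.restrict DS)))
    (hJP : ∀ W : Submodule ℂ (MeasureTheory.Lp ℂ 2 μ),
      IsClosed (W : Set (MeasureTheory.Lp ℂ 2 μ)) →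
      (∀ l ∈ Λ, ∀ f ∈ W, Mod l f ∈ W) →
      (∀ x, IsClosed ((J W x : Set (MeasureTheory.Lp ℂ 2 (ν.restrict DS))))) ∧
      (∀ x v, P W x v ∈ J W x ∧ ∀ w ∈ J W x, (inner ℂ (v - P W x v) w : ℂ) = 0) ∧
      (∀ a b : MeasureTheory.Lp ℂ 2 (ν.restrict DS),
        Measurable fun x => (inner ℂ (P W x a) b : ℂ)) ∧
      (∀ f : MeasureTheory.Lp ℂ 2 μ,
        f ∈ W ↔ ∀ᵐ x ∂(μ.restrict PiS), (Z (F f)) x ∈ J W x))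
    (Wseq : ℕ → Submodule ℂ (Lp ℂ 2 μ))
    (hWseq : ∀ n, IsClosed ((Wseq n : Set (Lp ℂ 2 μ))) ∧
      ∀ l ∈ Λ, ∀ f ∈ Wseq n, Mod l f ∈ Wseq n)
    -- (Wₙ) is Cauchy in the modulation metric
    (hCauchy : ∀ ε : ℝ, 0 < ε → ∃ N : ℕ, ∀ m ≥ N, ∀ n ≥ N,
      modMetric (μ.restrict PiS) P (Wseq m) (Wseq n) < ε) :
    ∃ W : Submodule ℂ (Lp ℂ 2 μ),
      IsClosed ((W : Set (Lp ℂ 2 μ))) ∧ (∀ l ∈ Λ, ∀ f ∈ W, Mod l f ∈ W) ∧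
      Filter.Tendsto (fun n => modMetric (μ.restrict PiS) P (Wseq n) W)
        Filter.atTop (nhds 0) :=
  stmt13_general G μ ν Λ PiS DS Mod Trans F hF Z hZ J P hJP Wseq hWseq hCauchy
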